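/- arXiv:2106.02500 — 2 statements merged into one kernel-verified Lean document; each statement's English description precedes it below -/
import Mathlib

section
/- Let n, δ ∈ ℕ with δ ≥ 3 and n ≥ 8. If G is a connected, triangle-free graph of order n, minimum degree δ and diameter d, then π(G) ≥ δ(d−4)(d−1)/(8(n−1)). -/
/-!
Fix a geodesic `x = f 0, f 1, …, f d = y` realising the diameter and a vertex `v` with
`a = dist x v`. Triangle-freeness makes the neighbourhoods of the ends of an edge disjoint, so
the block `N(f j) ∪ N(f (j+1))` has at least `2δ` vertices, all at distance `j - 1, …, j + 2`
from `x`; blocks whose indices differ by at least `4` are therefore disjoint. Taking the blocks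
at `j = 0, 4, 8, …` below `a`, every vertex in block `j` is at distance at least `a - j - 2` from
`v`, so these blocks contribute about `δ a² / 4` to the distance sum of `v`. Doing the same from
`y` with `d - a` and adding gives about `δ (a² + (d - a)²) / 4 ≥ δ d² / 8`.
-/

open Finset

theorem Finset.mul_sum_le_sum_of_pairwiseDisjoint {ι α : Type*} {T : Finset ι}
    {B : ι → Finset α} {S : Finset α} {m : ℕ} {c : ι → ℕ} {f : α → ℕ}
    (hB : (T : Set ι).PairwiseDisjoint B) (hBS : ∀ i ∈ T, B i ⊆ S)
    (hm : ∀ i ∈ T, m ≤ #(B i)) (hc : ∀ i ∈ T, ∀ w ∈ B i, c i ≤ f w) :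
    m * ∑ i ∈ T, c i ≤ ∑ w ∈ S, f w := by
  classical
  calc m * ∑ i ∈ T, c i ≤ ∑ i ∈ T, #(B i) * c i := by
        rw [mul_sum]; exact sum_le_sum fun i hi => Nat.mul_le_mul_right _ (hm i hi)
    _ ≤ ∑ i ∈ T, ∑ w ∈ B i, f w := sum_le_sum fun i hi => by
        simpa using card_nsmul_le_sum (B i) f (c i) (hc i hi)
    _ = ∑ w ∈ T.biUnion B, f w := (sum_biUnion hB).symm
    _ ≤ ∑ w ∈ S, f w := sum_le_sum_of_subset (biUnion_subset.2 hBS)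

/- If `a ≤ dist x v`, every neighbour of the geodesic vertices `4 s`, `4 s + 1` is at distance
at least `a - 2 - 4 s` from `v`; the blocks with `4 s + 3 ≤ a` are the ones used. -/
def blockSum (a : ℕ) : ℕ := ∑ s ∈ range ((a + 1) / 4), (a - 2 - 4 * s)

theorem sq_le_eight_mul_blockSum_add_four : ∀ a : ℕ, a ^ 2 ≤ 8 * blockSum a + 4
  | 0 | 1 | 2 | 3 => by decide
  | a + 4 => by
    have ih := sq_le_eight_mul_blockSum_add_four a
    have hstep : blockSum (a + 4) = blockSum a + (a + 2) := by
      rw [blockSum, show (a + 4 + 1) / 4 = (a + 1) / 4 + 1 by omega, sum_range_succ']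
      congr 1
      exact sum_congr rfl fun s _ => by omega
    rw [hstep]
    nlinarith

namespace SimpleGraph

variable {V : Type*} {G : SimpleGraph V}

theorem Walk.dist_getVert_of_length_eq_dist {u v : V} (p : G.Walk u v)
    (hp : p.length = G.dist u v) (n : ℕ) : G.dist u (p.getVert n) = min n p.length := by
  rw [← length_eq_dist_of_subwalk hp (p.isSubwalk_take n), take_length]

section Finite

variable [Fintype V] [DecidableRel G.Adj]

theorem CliqueFree.two_mul_minDegree_le_card_neighborFinset_union [DecidableEq V]
    (h : G.CliqueFree 3) {u v : V} (hadj : G.Adj u v) :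
    2 * G.minDegree ≤ #(G.neighborFinset u ∪ G.neighborFinset v) := by
  have hdisj : Disjoint (G.neighborFinset u) (G.neighborFinset v) :=
    Finset.disjoint_left.2 fun w hu hv => h {u, v, w} <| is3Clique_triple_iff.2
      ⟨hadj, (mem_neighborFinset _ _ _).1 hu, (mem_neighborFinset _ _ _).1 hv⟩
  rw [card_union_of_disjoint hdisj, card_neighborFinset_eq_degree, card_neighborFinset_eq_degree]
  linarith [G.minDegree_le_degree u, G.minDegree_le_degree v]

theorem two_mul_minDegree_mul_blockSum_le_sum_dist (hconn : G.Connected) (htf : G.CliqueFree 3)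
    {x y : V} (p : G.Walk x y) (hp : p.length = G.dist x y) (v : V) {a : ℕ}
    (hav : a ≤ G.dist x v) (hap : a ≤ p.length) :
    2 * G.minDegree * blockSum a ≤ ∑ w ∈ univ.filter (G.dist x · < a), G.dist v w := by
  classical
  have hnbr : ∀ j ≤ p.length, ∀ w, G.Adj (p.getVert j) w →
      G.dist x w ≤ j + 1 ∧ j ≤ G.dist x w + 1 := by
    intro j hj w hw
    have := hw.diff_dist_adj (u := x)
    rw [p.dist_getVert_of_length_eq_dist hp, min_eq_left hj] at this
    omega
  let B : ℕ → Finset V := fun s =>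
    G.neighborFinset (p.getVert (4 * s)) ∪ G.neighborFinset (p.getVert (4 * s + 1))
  have hB : ∀ s ∈ range ((a + 1) / 4), ∀ w ∈ B s,
      G.dist x w ≤ 4 * s + 2 ∧ 4 * s ≤ G.dist x w + 1 := by
    intro s hs w hw
    rw [mem_range] at hs
    rcases mem_union.1 hw with hw | hw
    · have := hnbr (4 * s) (by omega) w ((mem_neighborFinset _ _ _).1 hw); omega
    · have := hnbr (4 * s + 1) (by omega) w ((mem_neighborFinset _ _ _).1 hw); omega
  refine mul_sum_le_sum_of_pairwiseDisjoint (B := B) ?_ ?_ ?_ ?_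
  · intro s hs s' hs' hne
    refine Finset.disjoint_left.2 fun w hw hw' => hne ?_
    have := hB s hs w hw
    have := hB s' hs' w hw'
    omega
  · intro s hs w hw
    have := hB s hs w hw
    rw [mem_range] at hs
    rw [mem_filter]
    exact ⟨mem_univ w, by omega⟩
  · intro s hs
    rw [mem_range] at hs
    exact htf.two_mul_minDegree_le_card_neighborFinset_union (p.adj_getVert_succ (by omega))
  · intro s hs w hw
    have := hB s hs w hw
    have := hconn.dist_triangle (u := x) (v := w) (w := v)
    rw [dist_comm (u := w)] at this
    omega

theorem minDegree_mul_le_eight_mul_sum_dist (hconn : G.Connected) (htf : G.CliqueFree 3)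
    {x y : V} (hxy : x ≠ y) (v : V) :
    (G.minDegree : ℝ) * (G.dist x y - 4) * (G.dist x y - 1) ≤
      8 * ∑ w, (G.dist v w : ℝ) := by
  obtain ⟨p, hp⟩ := hconn.exists_walk_length_eq_dist x y
  set d := G.dist x y
  set a := min (G.dist x v) d
  have hd : 1 ≤ d := hconn.pos_dist_of_ne hxy
  have hyv : d ≤ G.dist x v + G.dist y v := by
    have := hconn.dist_triangle (u := x) (v := v) (w := y)
    rwa [dist_comm (u := v)] at this
  have hleft := two_mul_minDegree_mul_blockSum_le_sum_dist hconn htf p hp v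
    (a := a) (min_le_left _ _) (by omega)
  have hright := two_mul_minDegree_mul_blockSum_le_sum_dist hconn htf p.reverse
    (by rw [Walk.length_reverse, hp, dist_comm]) v (a := d - a) (by omega) (by simp [hp])
  -- a vertex closer than `a` to `x` is at distance at least `d - a` from `y`
  have hsplit : ∑ w ∈ univ.filter (G.dist x · < a), G.dist v w
      + ∑ w ∈ univ.filter (G.dist y · < d - a), G.dist v w ≤ ∑ w, G.dist v w := by
    rw [← sum_filter_add_sum_filter_not univ (G.dist x · < a)]
    refine add_le_add_right (sum_le_sum_of_subset fun w hw => ?_) _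
    simp only [mem_filter, mem_univ, true_and] at hw ⊢
    have := hconn.dist_triangle (u := x) (v := w) (w := y)
    rw [dist_comm (u := w)] at this
    omega
  have hS : (2 * G.minDegree * (blockSum a + blockSum (d - a)) : ℝ)
      ≤ ∑ w, (G.dist v w : ℝ) := by
    exact_mod_cast (by linarith :
      2 * G.minDegree * (blockSum a + blockSum (d - a)) ≤ ∑ w, G.dist v w)
  have hsqa : ((a : ℝ)) ^ 2 ≤ 8 * blockSum a + 4 := by
    exact_mod_cast sq_le_eight_mul_blockSum_add_four a
  have hsqb : ((d - a : ℕ) : ℝ) ^ 2 ≤ 8 * blockSum (d - a) + 4 := by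
    exact_mod_cast sq_le_eight_mul_blockSum_add_four (d - a)
  have hδ : (0 : ℝ) ≤ G.minDegree := Nat.cast_nonneg _
  have hsum : (0 : ℝ) ≤ ∑ w, (G.dist v w : ℝ) := by positivity
  push_cast [show a ≤ d from min_le_right _ _] at hsqb
  rcases le_or_gt 4 d with h4 | h4
  · have h4' : (4 : ℝ) ≤ d := by exact_mod_cast h4
    calc (G.minDegree : ℝ) * (d - 4) * (d - 1) ≤ G.minDegree * (d ^ 2 - 16) := by
          nlinarith
      _ ≤ G.minDegree * (2 * (a ^ 2 + (d - a) ^ 2) - 16) := by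
          gcongr; nlinarith [sq_nonneg ((a : ℝ) - (d - a))]
      _ ≤ 8 * ∑ w, (G.dist v w : ℝ) := by nlinarith
  · have h4' : (d : ℝ) < 4 := by exact_mod_cast h4
    have hd' : (1 : ℝ) ≤ d := by exact_mod_cast hd
    nlinarith [mul_nonneg hδ (sub_nonneg.2 hd'), mul_nonneg hδ (sub_nonneg.2 h4'.le)]

end Finite

end SimpleGraph

theorem stmt11_general {V : Type*} [Fintype V] (G : SimpleGraph V)
    [DecidableRel G.Adj] (n δ d : ℕ) (hn : Fintype.card V = n) (hδ : G.minDegree = δ) (hconn : G.Connected) (h8 : 8 ≤ n) (htf : G.CliqueFree 3)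
    (hd : (Finset.univ.sup fun v : V => Finset.univ.sup fun w : V => G.dist v w) = d) :
    (δ : ℝ) * ((d : ℝ) - 4) * ((d : ℝ) - 1) / (8 * ((n : ℝ) - 1)) ≤ (⨅ v : V, (∑ w : V, (G.dist v w : ℝ)) / ((n : ℝ) - 1)) := by
  obtain ⟨u, u', huu'⟩ := Fintype.exists_pair_of_one_lt_card (by omega : 1 < Fintype.card V)
  have : Nonempty V := ⟨u⟩
  have hdist_le : ∀ v w, G.dist v w ≤ d := fun v w =>
    hd ▸ (le_sup (f := G.dist v) (mem_univ w)).trans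
      (le_sup (f := fun v => univ.sup (G.dist v)) (mem_univ v))
  obtain ⟨x, -, hx⟩ := exists_mem_eq_sup univ univ_nonempty fun v => univ.sup (G.dist v)
  obtain ⟨y, -, hy⟩ := exists_mem_eq_sup univ univ_nonempty (G.dist x)
  have hxy : G.dist x y = d := by rw [← hd, hx, hy]
  have hxy' : x ≠ y := by
    rintro rfl
    have := hconn.pos_dist_of_ne huu'
    have := hdist_le u u'
    simp at hxy
    omega
  have hn1 : (0 : ℝ) < n - 1 := by
    have : (8 : ℝ) ≤ n := by exact_mod_cast h8
    linarith
  refine le_ciInf fun v => ?_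
  have := G.minDegree_mul_le_eight_mul_sum_dist hconn htf hxy' v
  rw [hxy, hδ] at this
  rw [div_le_div_iff₀ (by positivity) hn1]
  nlinarith [mul_le_mul_of_nonneg_right this hn1.le]

theorem stmt11 {V : Type*} [Fintype V] [DecidableEq V] (G : SimpleGraph V)
    [DecidableRel G.Adj] (n δ d : ℕ) (hn : Fintype.card V = n) (hδ : G.minDegree = δ) (hconn : G.Connected) (h3 : 3 ≤ δ) (h8 : 8 ≤ n) (htf : G.CliqueFree 3)
    (hd : (Finset.univ.sup fun v : V => Finset.univ.sup fun w : V => G.dist v w) = d) :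
    (δ : ℝ) * ((d : ℝ) - 4) * ((d : ℝ) - 1) / (8 * ((n : ℝ) - 1)) ≤ (⨅ v : V, (∑ w : V, (G.dist v w : ℝ)) / ((n : ℝ) - 1)) :=
  stmt11_general G n δ d hn hδ hconn h8 htf hd
end

section
/- Let n, δ ∈ ℕ with δ ≥ 3 and n ≥ 8. If G is a connected, triangle-free graph of order n and minimum degree δ, then diam(G) − π(G) ≤ 3(n−1)/(2δ) + 5/2. -/
open SimpleGraph Finset

lemma step_ineq : ∀ K : ℕ, (K+1)*K ≤ (K-1)*(K-2) + (4*K-2)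
  | 0 => by simp
  | 1 => by norm_num
  | (K+2) => by
    have e1 : K+2-1 = K+1 := by omega
    have e2 : K+2-2 = K := by omega
    have e3 : 4*(K+2)-2 = 4*K+6 := by omega
    rw [e1, e2, e3]
    exact le_of_eq (by ring)

lemma blockSum_s12 : ∀ (K a : ℕ), (K-1)*(K-2) ≤ ∑ k ∈ Finset.range K, (max (a - 4*k) (4*k - a) - 3)
  | 0, a => by simp
  | 1, a => by simp
  | (K+2), a => by
    have ih := blockSum_s12 K (a - 4)
    rw [Finset.sum_range_succ' _ (K+1), Finset.sum_range_succ]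
    have key : ∀ k ∈ Finset.range K,
        (max ((a-4) - 4*k) (4*k - (a-4)) - 3) ≤ (max (a - 4*(k+1)) (4*(k+1) - a) - 3) := by
      intro k _
      have h1 : (a-4) - 4*k = a - 4*(k+1) := by omega
      have h2 : 4*k - (a-4) ≤ 4*(k+1) - a := by omega
      refine Nat.sub_le_sub_right ?_ 3
      rw [h1]
      exact max_le_max le_rfl h2
    have hmid : (K-1)*(K-2) ≤ ∑ k ∈ Finset.range K, (max (a - 4*(k+1)) (4*(k+1) - a) - 3) :=
      le_trans ih (Finset.sum_le_sum key)
    have e0 : a - 3 ≤ max (a - 4*0) (4*0 - a) - 3 :=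
      Nat.sub_le_sub_right (le_max_left _ _) 3
    have e1 : (4*(K+1) - a) - 3 ≤ max (a - 4*(K+1)) (4*(K+1) - a) - 3 :=
      Nat.sub_le_sub_right (le_max_right _ _) 3
    have h := step_ineq K
    have eK1 : K+2-1 = K+1 := by omega
    have eK2 : K+2-2 = K := by omega
    rw [eK1, eK2]
    omega

lemma finalArith (N Δ Kr Mr D : ℝ) (hN : 7 ≤ N) (hΔ : 3 ≤ Δ) (hKr : 1 ≤ Kr)
    (hnd : 2*Δ*Kr ≤ N + 1) (hD : D ≤ 4*Kr) (hM : (Kr-1)*(Kr-2) ≤ Mr) :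
    D - (N + 2*Δ*Mr)/N ≤ 3*N/(2*Δ) + 5/2 := by
  have hN0 : (0:ℝ) < N := by linarith
  have hΔ0 : (0:ℝ) < Δ := by linarith
  have ht : 0 ≤ N - 2*Δ*Kr + Δ/2 := by linarith
  have key : 0 ≤ 3*N^2 - Δ*(8*Kr-7)*N + 4*Δ^2*((Kr-1)*(Kr-2)) := by
    nlinarith [sq_nonneg (N - 2*Δ*Kr + Δ/2),
      mul_nonneg (mul_nonneg hΔ0.le (by linarith : (0:ℝ) ≤ Kr + 1)) ht, sq_nonneg Δ]
  have hnum : 0 ≤ 3*N^2 + 5*Δ*N + 2*Δ*(N + 2*Δ*Mr) - 2*Δ*N*D := by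
    nlinarith [mul_nonneg (mul_nonneg (by linarith : (0:ℝ) ≤ 2*Δ) hN0.le) (sub_nonneg.2 hD),
      mul_nonneg (by positivity : (0:ℝ) ≤ 4*Δ^2) (sub_nonneg.2 hM)]
  have h2 : (0:ℝ) < 2*Δ*N := by positivity
  rw [sub_le_iff_le_add, ← sub_nonneg]
  have e : 3*N/(2*Δ) + 5/2 + (N + 2*Δ*Mr)/N - D
      = (3*N^2 + 5*Δ*N + 2*Δ*(N+2*Δ*Mr) - 2*Δ*N*D)/(2*Δ*N) := by
    field_simp
  rw [e]
  exact div_nonneg hnum h2.le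

lemma dist_getVert_le {V : Type*} {G : SimpleGraph V} (hconn : G.Connected) {x y : V}
    (p : G.Walk x y) : ∀ i : ℕ, G.dist x (p.getVert i) ≤ i := by
  intro i
  induction i with
  | zero => simp [SimpleGraph.Walk.getVert_zero]
  | succ i ih =>
    by_cases h : i < p.length
    · have hadj := p.adj_getVert_succ h
      have h1 : G.dist x (p.getVert (i+1)) ≤ G.dist x (p.getVert i) + G.dist (p.getVert i) (p.getVert (i+1)) :=
        hconn.dist_triangle
      have h2 : G.dist (p.getVert i) (p.getVert (i+1)) = 1 := SimpleGraph.dist_eq_one_iff_adj.2 hadj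
      omega
    · rw [p.getVert_of_length_le (by omega)]
      have h3 : G.dist x y ≤ p.length := SimpleGraph.dist_le p
      have h4 : G.dist x (p.getVert i) = G.dist x y := by
        rw [p.getVert_of_length_le (by omega)]
      omega

theorem stmt12 {V : Type*} [Fintype V] [DecidableEq V] (G : SimpleGraph V)
    [DecidableRel G.Adj] (n δ : ℕ) (hn : Fintype.card V = n) (hδ : G.minDegree = δ) (hconn : G.Connected) (h3 : 3 ≤ δ) (h8 : 8 ≤ n) (htf : G.CliqueFree 3) :
    (((Finset.univ.sup fun v : V => Finset.univ.sup fun w : V => G.dist v w) : ℕ) : ℝ) - (⨅ v : V, (∑ w : V, (G.dist v w : ℝ)) / ((n : ℝ) - 1)) ≤ 3 * ((n : ℝ) - 1) / (2 * (δ : ℝ)) + 5 / 2 := by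
  classical
  have hVne : Nonempty V := Fintype.card_pos_iff.mp (by omega)
  have hn8 : (8:ℝ) ≤ (n:ℝ) := by exact_mod_cast h8
  have hδ3 : (3:ℝ) ≤ (δ:ℝ) := by exact_mod_cast h3
  have hNpos : (0:ℝ) < (n:ℝ) - 1 := by linarith
  set d : ℕ := Finset.univ.sup fun v : V => Finset.univ.sup fun w : V => G.dist v w with hddef
  by_cases hd0 : d = 0
  · have hinf : (0:ℝ) ≤ ⨅ v : V, (∑ w : V, (G.dist v w : ℝ)) / ((n:ℝ)-1) := by
      apply le_ciInf
      intro v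
      positivity
    have : (0:ℝ) ≤ 3 * ((n:ℝ) - 1) / (2 * (δ:ℝ)) := by positivity
    rw [hd0]
    push_cast
    linarith
  -- main case
  obtain ⟨x, -, hx⟩ := Finset.exists_mem_eq_sup Finset.univ Finset.univ_nonempty
    (fun v : V => Finset.univ.sup fun w : V => G.dist v w)
  obtain ⟨y, -, hy⟩ := Finset.exists_mem_eq_sup Finset.univ Finset.univ_nonempty
    (fun w : V => G.dist x w)
  have hdxy : G.dist x y = d := by rw [hddef, hx, hy]
  obtain ⟨p, hp⟩ := hconn.exists_walk_length_eq_dist x y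
  have hpl : p.length = d := by rw [hp, hdxy]
  set g : ℕ → V := fun i => p.getVert i with hg
  have hgA : ∀ i, G.dist x (g i) ≤ i := dist_getVert_le hconn p
  have hgB : ∀ i, i ≤ d → G.dist (g i) y ≤ d - i := by
    intro i hi
    have h1 : p.reverse.getVert (d - i) = g i := by
      rw [SimpleGraph.Walk.getVert_reverse]
      show p.getVert (p.length - (d - i)) = p.getVert i
      congr 1
      omega
    have h2 := dist_getVert_le hconn p.reverse (d - i)
    rw [h1] at h2
    rw [SimpleGraph.dist_comm]
    exact h2
  have hgxlow : ∀ i, i ≤ d → i ≤ G.dist x (g i) := by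
    intro i hi
    have h1 : G.dist x y ≤ G.dist x (g i) + G.dist (g i) y := hconn.dist_triangle
    have h2 := hgB i hi
    omega
  set K : ℕ := (d-1)/4 + 1 with hK
  have hKd : d ≤ 4*K := by omega
  have hK4 : ∀ k, k < K → 4*k+1 ≤ d := by intro k hk; omega
  have hK1 : 1 ≤ K := by omega
  set S : ℕ → Finset V := fun k => G.neighborFinset (g (4*k)) ∪ G.neighborFinset (g (4*k+1)) with hS
  have hadj : ∀ k, k < K → G.Adj (g (4*k)) (g (4*k+1)) := by
    intro k hk
    exact p.adj_getVert_succ (by have := hK4 k hk; omega)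
  have hScard : ∀ k, k < K → 2*δ ≤ (S k).card := by
    intro k hk
    have hdisj : Disjoint (G.neighborFinset (g (4*k))) (G.neighborFinset (g (4*k+1))) := by
      rw [Finset.disjoint_left]
      intro u hu1 hu2
      rw [SimpleGraph.mem_neighborFinset] at hu1 hu2
      exact htf {g (4*k), g (4*k+1), u} (SimpleGraph.is3Clique_triple_iff.2 ⟨hadj k hk, hu1, hu2⟩)
    have hcu : (S k).card = (G.neighborFinset (g (4*k))).card + (G.neighborFinset (g (4*k+1))).card :=
      Finset.card_union_of_disjoint hdisj
    have d1 : δ ≤ G.degree (g (4*k)) := hδ ▸ G.minDegree_le_degree _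
    have d2 : δ ≤ G.degree (g (4*k+1)) := hδ ▸ G.minDegree_le_degree _
    rw [hcu, SimpleGraph.card_neighborFinset_eq_degree, SimpleGraph.card_neighborFinset_eq_degree]
    omega
  have hmemadj : ∀ k, ∀ w ∈ S k, (G.Adj (g (4*k)) w ∨ G.Adj (g (4*k+1)) w) := by
    intro k w hw
    rcases Finset.mem_union.mp hw with h | h
    · rw [SimpleGraph.mem_neighborFinset] at h
      exact Or.inl h
    · rw [SimpleGraph.mem_neighborFinset] at h
      exact Or.inr h
  have hmemdist : ∀ k, k < K → ∀ w ∈ S k, G.dist w (g (4*k)) ≤ 2 := by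
    intro k hk w hw
    rcases hmemadj k w hw with h | h
    · rw [SimpleGraph.dist_comm]
      exact (SimpleGraph.dist_eq_one_iff_adj.2 h).le.trans (by norm_num)
    · have h1 : G.dist w (g (4*k)) ≤ G.dist w (g (4*k+1)) + G.dist (g (4*k+1)) (g (4*k)) :=
        hconn.dist_triangle
      have h2 : G.dist w (g (4*k+1)) = 1 := by
        rw [SimpleGraph.dist_comm]; exact SimpleGraph.dist_eq_one_iff_adj.2 h
      have h3 : G.dist (g (4*k+1)) (g (4*k)) = 1 := by
        rw [SimpleGraph.dist_comm]; exact SimpleGraph.dist_eq_one_iff_adj.2 (hadj k hk)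
      omega
  have hdisjS : ∀ k l, k < K → l < K → k < l → Disjoint (S k) (S l) := by
    intro k l hkK hlK hkl
    rw [Finset.disjoint_left]
    intro u hu1 hu2
    obtain ⟨i, hi, hiu⟩ : ∃ i, (i = 4*k ∨ i = 4*k+1) ∧ G.Adj (g i) u := by
      rcases hmemadj k u hu1 with h | h
      · exact ⟨4*k, Or.inl rfl, h⟩
      · exact ⟨4*k+1, Or.inr rfl, h⟩
    obtain ⟨j, hj, hju⟩ : ∃ j, (j = 4*l ∨ j = 4*l+1) ∧ G.Adj (g j) u := by
      rcases hmemadj l u hu2 with h | h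
      · exact ⟨4*l, Or.inl rfl, h⟩
      · exact ⟨4*l+1, Or.inr rfl, h⟩
    have hjd : j ≤ d := by have := hK4 l hlK; omega
    have h1 : j ≤ G.dist x (g j) := hgxlow j hjd
    have h2 : G.dist x (g j) ≤ G.dist x (g i) + G.dist (g i) (g j) := hconn.dist_triangle
    have h3 : G.dist (g i) (g j) ≤ G.dist (g i) u + G.dist u (g j) := hconn.dist_triangle
    have h4 : G.dist (g i) u = 1 := SimpleGraph.dist_eq_one_iff_adj.2 hiu
    have h5 : G.dist u (g j) = 1 := by
      rw [SimpleGraph.dist_comm]; exact SimpleGraph.dist_eq_one_iff_adj.2 hju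
    have h6 := hgA i
    omega
  -- per-vertex sum bound
  have hsumv : ∀ v : V, (n - 1) + 2*δ*((K-1)*(K-2)) ≤ ∑ w : V, G.dist v w := by
    intro v
    set a := G.dist v x with ha
    have hab : d ≤ a + G.dist v y := by
      have h1 : G.dist x y ≤ G.dist x v + G.dist v y := hconn.dist_triangle
      have h2 : G.dist x v = a := SimpleGraph.dist_comm
      omega
    have hglow : ∀ i, i ≤ d → max (a - i) (i - a) ≤ G.dist v (g i) := by
      intro i hi
      have t1 : a ≤ G.dist v (g i) + i := by
        have h1 : G.dist v x ≤ G.dist v (g i) + G.dist (g i) x := hconn.dist_triangle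
        have h2 : G.dist (g i) x = G.dist x (g i) := SimpleGraph.dist_comm
        have h3 := hgA i
        omega
      have t2 : G.dist v y ≤ G.dist v (g i) + (d - i) := by
        have h1 : G.dist v y ≤ G.dist v (g i) + G.dist (g i) y := hconn.dist_triangle
        have h2 := hgB i hi
        omega
      exact max_le (by omega) (by omega)
    have hblock : ∀ k, k < K → ∀ w ∈ S k, w ≠ v → 1 + (max (a - 4*k) (4*k - a) - 3) ≤ G.dist v w := by
      intro k hk w hw hwv
      have h1 : 0 < G.dist v w := hconn.pos_dist_of_ne (fun h => hwv h.symm)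
      have h2 : G.dist v (g (4*k)) ≤ G.dist v w + 2 := by
        have hh : G.dist v (g (4*k)) ≤ G.dist v w + G.dist w (g (4*k)) := hconn.dist_triangle
        have := hmemdist k hk w hw
        omega
      have h3 := hglow (4*k) (by have := hK4 k hk; omega)
      set m := max (a - 4*k) (4*k - a) with hm
      omega
    have hvS : ∀ k, k < K → v ∈ S k → (max (a - 4*k) (4*k - a) - 3) = 0 := by
      intro k hk hv
      have h2 : G.dist v (g (4*k)) ≤ 2 := hmemdist k hk v hv
      have t1 : a ≤ 4*k + 2 := by
        have h1 : G.dist v x ≤ G.dist v (g (4*k)) + G.dist (g (4*k)) x := hconn.dist_triangle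
        have h3 : G.dist (g (4*k)) x = G.dist x (g (4*k)) := SimpleGraph.dist_comm
        have h4 := hgA (4*k)
        omega
      have t2 : 4*k ≤ a + 2 := by
        have h1 : 4*k ≤ G.dist x (g (4*k)) := hgxlow (4*k) (by have := hK4 k hk; omega)
        have h3 : G.dist x (g (4*k)) ≤ G.dist x v + G.dist v (g (4*k)) := hconn.dist_triangle
        have h4 : G.dist x v = a := SimpleGraph.dist_comm
        omega
      have : max (a - 4*k) (4*k - a) ≤ 2 := max_le (by omega) (by omega)
      omega
    have pointwise : ∀ w : V,
        (if w = v then 0 else 1) + (∑ k ∈ Finset.range K, if w ∈ S k then (max (a - 4*k) (4*k - a) - 3) else 0)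
          ≤ G.dist v w := by
      intro w
      by_cases hwv : w = v
      · subst hwv
        rw [if_pos rfl, SimpleGraph.dist_self]
        have : (∑ k ∈ Finset.range K, if w ∈ S k then (max (a - 4*k) (4*k - a) - 3) else 0) = 0 := by
          apply Finset.sum_eq_zero
          intro k hk
          by_cases hwk : w ∈ S k
          · rw [if_pos hwk]; exact hvS k (Finset.mem_range.1 hk) hwk
          · rw [if_neg hwk]
        omega
      · rw [if_neg hwv]
        by_cases hex : ∃ k ∈ Finset.range K, w ∈ S k
        · obtain ⟨k₀, hk₀, hwk₀⟩ := hex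
          have hsum_eq : (∑ k ∈ Finset.range K, if w ∈ S k then (max (a - 4*k) (4*k - a) - 3) else 0)
              = (max (a - 4*k₀) (4*k₀ - a) - 3) := by
            rw [Finset.sum_eq_single_of_mem k₀ hk₀ ?_]
            · rw [if_pos hwk₀]
            · intro l hl hlk
              rw [if_neg]
              intro hwl
              rcases lt_or_gt_of_ne hlk with h | h
              · exact Finset.disjoint_left.mp
                  (hdisjS l k₀ (Finset.mem_range.1 hl) (Finset.mem_range.1 hk₀) h) hwl hwk₀
              · exact Finset.disjoint_left.mp
                  (hdisjS k₀ l (Finset.mem_range.1 hk₀) (Finset.mem_range.1 hl) h) hwk₀ hwl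
          rw [hsum_eq]
          exact hblock k₀ (Finset.mem_range.1 hk₀) w hwk₀ hwv
        · have hz : (∑ k ∈ Finset.range K, if w ∈ S k then (max (a - 4*k) (4*k - a) - 3) else 0) = 0 :=
            Finset.sum_eq_zero (fun k hk => if_neg (fun hw => hex ⟨k, hk, hw⟩))
          rw [hz]
          have := hconn.pos_dist_of_ne (fun h => hwv h.symm)
          omega
    have hstep1 : ∑ w : V, ((if w = v then 0 else 1)
        + (∑ k ∈ Finset.range K, if w ∈ S k then (max (a - 4*k) (4*k - a) - 3) else 0))
        ≤ ∑ w : V, G.dist v w :=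
      Finset.sum_le_sum (fun w _ => pointwise w)
    have hsplit : ∑ w : V, ((if w = v then 0 else 1)
        + (∑ k ∈ Finset.range K, if w ∈ S k then (max (a - 4*k) (4*k - a) - 3) else 0))
        = (∑ w : V, if w = v then 0 else 1)
          + ∑ w : V, (∑ k ∈ Finset.range K, if w ∈ S k then (max (a - 4*k) (4*k - a) - 3) else 0) :=
      Finset.sum_add_distrib
    have hones : (∑ w : V, if w = v then 0 else 1) = n - 1 := by
      rw [← Finset.sum_erase_add _ _ (Finset.mem_univ v), if_pos rfl]
      have : ∀ w ∈ Finset.univ.erase v, (if w = v then 0 else 1) = 1 := by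
        intro w hw
        rw [if_neg (Finset.ne_of_mem_erase hw)]
      rw [Finset.sum_congr rfl this, Finset.sum_const, Finset.card_erase_of_mem (Finset.mem_univ v)]
      simp [hn]
    have hdouble : ∑ w : V, (∑ k ∈ Finset.range K, if w ∈ S k then (max (a - 4*k) (4*k - a) - 3) else 0)
        = ∑ k ∈ Finset.range K, (S k).card * (max (a - 4*k) (4*k - a) - 3) := by
      rw [Finset.sum_comm]
      apply Finset.sum_congr rfl
      intro k _
      rw [Finset.sum_ite_mem, Finset.univ_inter, Finset.sum_const, smul_eq_mul]
    have hlb : ∑ k ∈ Finset.range K, 2*δ * (max (a - 4*k) (4*k - a) - 3)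
        ≤ ∑ k ∈ Finset.range K, (S k).card * (max (a - 4*k) (4*k - a) - 3) := by
      apply Finset.sum_le_sum
      intro k hk
      exact Nat.mul_le_mul_right _ (hScard k (Finset.mem_range.1 hk))
    have hfactor : ∑ k ∈ Finset.range K, 2*δ * (max (a - 4*k) (4*k - a) - 3)
        = 2*δ * ∑ k ∈ Finset.range K, (max (a - 4*k) (4*k - a) - 3) := by
      rw [Finset.mul_sum]
    have hbs := blockSum_s12 K a
    have hfin : 2*δ*((K-1)*(K-2)) ≤ 2*δ * ∑ k ∈ Finset.range K, (max (a - 4*k) (4*k - a) - 3) :=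
      Nat.mul_le_mul_left _ hbs
    omega
  -- counting: 2δK ≤ n
  have hcount : 2*δ*K ≤ n := by
    have hbu : ((Finset.range K).biUnion S).card = ∑ k ∈ Finset.range K, (S k).card := by
      apply Finset.card_biUnion
      intro i hi j hj hij
      rcases lt_or_gt_of_ne hij with h | h
      · exact hdisjS i j (Finset.mem_range.1 hi) (Finset.mem_range.1 hj) h
      · exact (hdisjS j i (Finset.mem_range.1 hj) (Finset.mem_range.1 hi) h).symm
    have h1 : ∑ k ∈ Finset.range K, 2*δ ≤ ∑ k ∈ Finset.range K, (S k).card :=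
      Finset.sum_le_sum (fun k hk => hScard k (Finset.mem_range.1 hk))
    have h2 : ((Finset.range K).biUnion S).card ≤ n := by
      rw [← hn]
      exact Finset.card_le_univ _
    have h3 : ∑ k ∈ Finset.range K, 2*δ = K * (2*δ) := by
      rw [Finset.sum_const, Finset.card_range, smul_eq_mul]
    have h4 : 2*δ*K = K*(2*δ) := by ring
    omega
  -- assemble over ℝ
  set M : ℕ := (K-1)*(K-2) with hM
  clear_value M
  clear_value K
  clear_value d
  have hπ : ((n - 1 + 2*δ*M : ℕ) : ℝ) / ((n:ℝ)-1)
      ≤ ⨅ v : V, (∑ w : V, (G.dist v w : ℝ)) / ((n:ℝ)-1) := by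
    apply le_ciInf
    intro v
    have h1 := hsumv v
    have h2 : ((n - 1 + 2*δ*M : ℕ) : ℝ) ≤ ∑ w : V, (G.dist v w : ℝ) := by
      rw [← Nat.cast_sum]
      exact_mod_cast h1
    exact div_le_div_of_nonneg_right h2 hNpos.le
  have hKr : (1:ℝ) ≤ (K:ℝ) := by exact_mod_cast hK1
  have hMr : ((K:ℝ)-1)*((K:ℝ)-2) ≤ (M:ℝ) := by
    rcases le_or_gt 2 K with h | h
    · have : (M:ℝ) = ((K:ℝ)-1)*((K:ℝ)-2) := by
        rw [hM]
        push_cast [Nat.cast_sub (show 1 ≤ K by omega), Nat.cast_sub h]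
        ring
      linarith
    · have hK1' : K = 1 := by omega
      rw [hM, hK1']
      norm_num
  have hcountR : 2*(δ:ℝ)*(K:ℝ) ≤ ((n:ℝ)-1) + 1 := by
    have hc : ((2*δ*K : ℕ):ℝ) ≤ (n:ℝ) := by exact_mod_cast hcount
    push_cast at hc
    linarith
  have hDr : (d:ℝ) ≤ 4*(K:ℝ) := by exact_mod_cast hKd
  have hfa := finalArith ((n:ℝ)-1) (δ:ℝ) (K:ℝ) (M:ℝ) (d:ℝ) (by linarith) hδ3 hKr hcountR hDr hMr
  have hcast : ((n - 1 + 2*δ*M : ℕ) : ℝ) = ((n:ℝ)-1) + 2*(δ:ℝ)*(M:ℝ) := by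
    push_cast [Nat.cast_sub (show 1 ≤ n by omega)]
    ring
  rw [hcast] at hπ
  linarith [hπ, hfa]
end
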